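/- Let d ≥ 2 and n be positive integers with d dividing n, and set r = (d-1)n/d. Define γ(n,d,r) = min{φ(f,d) : f an n-weight function with f⁺ = r}. Then γ(n,d,r) = C(r,d) + C(r,d-1). -/

import Mathlib

/-!
Write `d = c + 1`, so that `n = (c + 1) k` and `r = c k`, and let `P` (of size `r`) and `N` (of
size `k`) be the nonnegative and the negative points of `f`. Every `d`-subset of `P` has
nonnegative sum, which gives `C(r, d)`. For the good `d`-sets meeting `N`, fix a map `P → N` whose
fibres `B_i` all have size `c`. For every permutation `g` of `P`, the sets `g(B_i) ∪ {i}`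
partition the ground set, so one of them has nonnegative sum. Since `Perm P` acts transitively on
the `c`-subsets of `P`, averaging over `g` yields at least `C(r, c)` good pairs `(S, i)`, i.e.
good `d`-sets with exactly one negative point.

The bound is attained by `r` ones, one entry `1 - c - 1/k` and `k - 1` entries `-c - 1/k`: the
total is `0`, and the good `d`-sets are exactly the `d`-subsets of the first `r + 1` points, of
which there are `C(r + 1, d) = C(r, d) + C(r, d - 1)`.
-/

open Finset MulAction

theorem MulAction.card_filter_smul_mem_mul_card {G X : Type*} [Group G] [MulAction G X]
    [Fintype G] [Fintype X] [DecidableEq X] [IsPretransitive G X] (x : X) (A : Finset X) :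
    #{g : G | g • x ∈ A} * Fintype.card X = #A * Fintype.card G := by
  have hfiber : ∀ y, #{g : G | g • x = y} = Nat.card (stabilizer G x) := by
    intro y
    obtain ⟨g₀, rfl⟩ := exists_smul_eq G x y
    rw [← Fintype.card_subtype, Nat.card_eq_fintype_card]
    refine Fintype.card_congr
      { toFun := fun g => ⟨g₀⁻¹ * g, by simp [mem_stabilizer_iff, mul_smul, g.2]⟩
        invFun := fun s => ⟨g₀ * s, by simp [mul_smul, (mem_stabilizer_iff.1 s.2)]⟩
        left_inv := fun g => by simp
        right_inv := fun s => by simp }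
  have hstab : Nat.card (stabilizer G x) * Fintype.card X = Fintype.card G := by
    rw [← Nat.card_eq_fintype_card, ← Nat.card_eq_fintype_card,
      ← index_stabilizer_of_transitive G x, Subgroup.card_mul_index]
  rw [card_eq_sum_card_fiberwise (s := {g : G | g • x ∈ A}) (t := A) (f := (· • x))
      fun g hg => (mem_filter.1 hg).2,
    ← hstab, ← mul_assoc, sum_congr rfl fun y hy => ?_, sum_const, smul_eq_mul]
  rw [filter_filter, ← hfiber y]
  congr 1
  ext g
  simp only [mem_filter, mem_univ, true_and, and_iff_right_iff_imp]
  rintro rfl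
  exact hy

theorem exists_fiber_card_eq {β ι : Type*} [Fintype β] [Fintype ι] [DecidableEq ι] {c : ℕ}
    (h : Fintype.card β = Fintype.card ι * c) : ∃ π : β → ι, ∀ i, #{b | π b = i} = c := by
  obtain ⟨e⟩ : Nonempty (β ≃ ι × Fin c) := Fintype.card_eq.1 (by simpa using h)
  refine ⟨fun b => (e b).1, fun i => ?_⟩
  rw [card_equiv e (t := {p | p.1 = i}) (by simp)]
  rw [card_filter, Fintype.sum_prod_type]
  simp [apply_ite card]

variable {β ι : Type*} [Fintype β] [DecidableEq β] [Fintype ι] [DecidableEq ι]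

theorem sum_perm_smul_fiber (π : β → ι) {c : ℕ} (hπ : ∀ i, #{b | π b = i} = c)
    (h : β → ℝ) (g : Equiv.Perm β) :
    ∑ i, ∑ b ∈ ((g • Set.powersetCard.ofCard (hπ i) : Set.powersetCard β c) : Finset β), h b
      = ∑ b, h b := by
  simp only [Set.powersetCard.coe_smul, Set.powersetCard.val_ofCard, smul_finset_def,
    sum_image fun _ _ _ _ => (MulAction.injective g ·)]
  rw [sum_fiberwise univ π fun b => h (g • b)]
  exact Equiv.sum_comp g h

theorem choose_le_card_filter_sum_add_nonneg [Nonempty ι] (π : β → ι) {c : ℕ}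
    (hπ : ∀ i, #{b | π b = i} = c)
    (h : β → ℝ) (v : ι → ℝ) (hsum : 0 ≤ ∑ b, h b + ∑ i, v i) :
    (Fintype.card β).choose c
      ≤ #{p : ι × Set.powersetCard β c | 0 ≤ ∑ b ∈ (p.2 : Finset β), h b + v p.1} := by
  set X := Set.powersetCard β c
  let block : ι → X := fun i => Set.powersetCard.ofCard (hπ i)
  let good : ι → Finset X := fun i => {S | 0 ≤ ∑ b ∈ (S : Finset β), h b + v i}
  have hcover : ∀ g : Equiv.Perm β, ∃ i, g • block i ∈ good i := by
    intro g
    by_contra! hneg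
    have : ∑ i, (∑ b ∈ ((g • block i : X) : Finset β), h b + v i) < 0 :=
      sum_neg (fun i _ => by simpa [good] using hneg i) univ_nonempty
    rw [sum_add_distrib, sum_perm_smul_fiber π hπ h g] at this
    linarith
  have hperms : Fintype.card (Equiv.Perm β) ≤ ∑ i, #{g : Equiv.Perm β | g • block i ∈ good i} :=
    calc Fintype.card (Equiv.Perm β)
        ≤ #(univ.biUnion fun i => {g : Equiv.Perm β | g • block i ∈ good i}) :=
          card_le_card fun g _ => by simpa using hcover g
      _ ≤ _ := card_biUnion_le
  have hpairs : #{p : ι × X | 0 ≤ ∑ b ∈ (p.2 : Finset β), h b + v p.1} = ∑ i, #(good i) := by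
    simp only [card_filter, good, Fintype.sum_prod_type]
  have hX : Fintype.card X = (Fintype.card β).choose c := by
    rw [← Nat.card_eq_fintype_card, Set.powersetCard.card, Nat.card_eq_fintype_card]
  have := Set.powersetCard.isPretransitive (α := β) (n := c)
  refine Nat.le_of_mul_le_mul_right ?_ (Fintype.card_pos (α := Equiv.Perm β))
  calc (Fintype.card β).choose c * Fintype.card (Equiv.Perm β)
      ≤ ∑ i, #{g : Equiv.Perm β | g • block i ∈ good i} * Fintype.card X := by
        rw [← sum_mul, hX, mul_comm]; exact Nat.mul_le_mul_right _ hperms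
    _ = _ := by
        rw [hpairs, sum_mul]
        exact sum_congr rfl fun i _ => MulAction.card_filter_smul_mem_mul_card _ _

variable {α : Type*} [Fintype α] [DecidableEq α]

theorem card_filter_sum_add_nonneg_le_card_filter_sum_nonneg (f : α → ℝ) (c : ℕ) :
    #{p : {x // f x < 0} × Set.powersetCard {x // 0 ≤ f x} c |
        0 ≤ ∑ b ∈ (p.2 : Finset {x // 0 ≤ f x}), f b + f p.1}
      ≤ #{Y ∈ powersetCard (c + 1) univ | 0 ≤ ∑ y ∈ Y, f y ∧ ∃ y ∈ Y, f y < 0} := by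
  have hnot : ∀ (i : {x // f x < 0}) (S : Finset {x // 0 ≤ f x}),
      (i : α) ∉ S.map (Function.Embedding.subtype _) := by
    intro i S hi
    obtain ⟨b, -, hb⟩ := mem_map.1 hi
    exact absurd (hb ▸ b.2) (not_le.2 i.2)
  refine card_le_card_of_injOn
    (fun p => insert (p.1 : α) ((p.2 : Finset {x // 0 ≤ f x}).map (Function.Embedding.subtype _)))
    ?_ ?_
  · rintro ⟨i, S⟩ hp
    have hp' : 0 ≤ ∑ b ∈ (S : Finset {x // 0 ≤ f x}), f b + f i := (mem_filter.1 hp).2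
    refine mem_filter.2 ⟨mem_powersetCard.2 ⟨subset_univ _, ?_⟩, ?_, i, mem_insert_self _ _, i.2⟩
    · rw [card_insert_of_notMem (hnot i S), card_map, Set.powersetCard.card_eq S]
    · rw [sum_insert (hnot i S), sum_map]
      simpa [add_comm] using hp'
  · rintro ⟨i, S⟩ - ⟨j, T⟩ - hST
    simp only at hST
    -- `i` is the only negative point of `insert i S`
    have hij : i = j := by
      have hj : (j : α) ∈ insert (i : α) ((S : Finset {x // 0 ≤ f x}).map
          (Function.Embedding.subtype _)) := hST ▸ mem_insert_self _ _
      rcases mem_insert.1 hj with h | h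
      · exact (Subtype.ext h).symm
      · exact absurd h (hnot j S)
    subst hij
    have hST' := congrArg (erase · (i : α)) hST
    simp only [erase_insert (hnot i _)] at hST'
    simp [Subtype.ext_iff, map_injective _ hST']

theorem choose_le_card_filter_sum_nonneg_exists_neg (f : α → ℝ) (hf : 0 ≤ ∑ x, f x) {c : ℕ}
    (hc : #{x | 0 ≤ f x} = #{x | f x < 0} * c) (hneg : ∃ x, f x < 0) :
    (#{x | 0 ≤ f x}).choose c
      ≤ #{Y ∈ powersetCard (c + 1) univ | 0 ≤ ∑ y ∈ Y, f y ∧ ∃ y ∈ Y, f y < 0} := by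
  obtain ⟨x₀, hx₀⟩ := hneg
  have : Nonempty {x // f x < 0} := ⟨⟨x₀, hx₀⟩⟩
  obtain ⟨π, hπ⟩ := exists_fiber_card_eq (β := {x // 0 ≤ f x}) (ι := {x // f x < 0})
    (c := c) (by simpa only [Fintype.card_subtype] using hc)
  have hsplit : 0 ≤ ∑ b : {x // 0 ≤ f x}, f b + ∑ i : {x // f x < 0}, f i := by
    rwa [← sum_filter_add_sum_filter_not univ (0 ≤ f ·),
      sum_subtype (p := fun x => 0 ≤ f x) _ (by simp),
      sum_subtype (p := fun x => f x < 0) _ (by simp)] at hf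
  have key := choose_le_card_filter_sum_add_nonneg π hπ (fun b => f b) (fun i => f i) hsplit
  rw [Fintype.card_subtype] at key
  exact key.trans (card_filter_sum_add_nonneg_le_card_filter_sum_nonneg f c)

theorem choose_add_choose_le_card_filter_sum_nonneg (f : α → ℝ) (hf : 0 ≤ ∑ x, f x) {c : ℕ}
    (hc : #{x | 0 ≤ f x} = #{x | f x < 0} * c) (hneg : ∃ x, f x < 0) :
    (#{x | 0 ≤ f x}).choose (c + 1) + (#{x | 0 ≤ f x}).choose c
      ≤ #{Y ∈ powersetCard (c + 1) univ | 0 ≤ ∑ y ∈ Y, f y} := by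
  rw [← card_filter_add_card_filter_not
    (s := {Y ∈ powersetCard (c + 1) univ | 0 ≤ ∑ y ∈ Y, f y}) (fun Y => ∀ y ∈ Y, 0 ≤ f y),
    filter_filter, filter_filter]
  refine add_le_add ?_ ((choose_le_card_filter_sum_nonneg_exists_neg f hf hc hneg).trans_eq ?_)
  · rw [← card_powersetCard]
    refine card_le_card fun Y hY => ?_
    obtain ⟨hYP, hYc⟩ := mem_powersetCard.1 hY
    have hYnonneg : ∀ y ∈ Y, 0 ≤ f y := fun y hy => (mem_filter.1 (hYP hy)).2
    exact mem_filter.2 ⟨mem_powersetCard.2 ⟨subset_univ _, hYc⟩, sum_nonneg hYnonneg, hYnonneg⟩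
  · simp only [not_forall, not_le, exists_prop]

noncomputable def extremalWeight (c k i : ℕ) : ℝ :=
  if i < c * k then 1 else if i = c * k then 1 - c - 1 / k else -c - 1 / k

section extremalWeight

variable {c k i : ℕ}

theorem extremalWeight_of_lt (h : i < c * k) : extremalWeight c k i = 1 := if_pos h

theorem extremalWeight_self : extremalWeight c k (c * k) = 1 - c - 1 / k := by
  simp [extremalWeight]

theorem extremalWeight_of_gt (h : c * k < i) : extremalWeight c k i = -c - 1 / k := by
  simp [extremalWeight, h.not_gt, h.ne']

theorem sum_range_extremalWeight (hk : 0 < k) :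
    ∑ i ∈ range ((c + 1) * k), extremalWeight c k i = 0 := by
  rw [show (c + 1) * k = (c * k + 1) + (k - 1) by rw [Nat.succ_mul]; omega, sum_range_add,
    sum_range_succ, sum_congr rfl fun i hi => extremalWeight_of_lt (mem_range.1 hi),
    extremalWeight_self, sum_congr rfl fun i _ => extremalWeight_of_gt (by omega)]
  have : (k : ℝ) ≠ 0 := by positivity
  simp [Nat.cast_sub hk]
  field_simp
  ring

theorem extremalWeight_le_one (hk : 0 < k) (i : ℕ) : extremalWeight c k i ≤ 1 := by
  have : (0 : ℝ) < 1 / k := by positivity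
  rcases lt_trichotomy i (c * k) with h | rfl | h
  · rw [extremalWeight_of_lt h]
  · rw [extremalWeight_self]; linarith [c.cast_nonneg (α := ℝ)]
  · rw [extremalWeight_of_gt h]; linarith [c.cast_nonneg (α := ℝ)]

theorem extremalWeight_nonneg_iff (hc : 0 < c) (hk : 0 < k) :
    0 ≤ extremalWeight c k i ↔ i < c * k := by
  have : (0 : ℝ) < 1 / k := by positivity
  have : (1 : ℝ) ≤ c := by exact_mod_cast hc
  rcases lt_trichotomy i (c * k) with h | rfl | h
  · simp [extremalWeight_of_lt h, h]
  · simp only [extremalWeight_self, lt_irrefl, iff_false, not_le]; linarith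
  · simp only [extremalWeight_of_gt h, h.not_gt, iff_false, not_le]; linarith

theorem sum_extremalWeight_nonneg_iff (hk : 0 < k) {Y : Finset ℕ} (hY : #Y = c + 1) :
    0 ≤ ∑ y ∈ Y, extremalWeight c k y ↔ ∀ y ∈ Y, y ≤ c * k := by
  have : (0 : ℝ) < 1 / k := by positivity
  constructor
  · intro hsum y hy
    by_contra! hgt
    have hrest : ∑ z ∈ Y.erase y, extremalWeight c k z ≤ c := by
      simpa [card_erase_of_mem hy, hY] using
        sum_le_card_nsmul (Y.erase y) _ 1 fun z _ => extremalWeight_le_one hk z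
    rw [← add_sum_erase _ _ hy, extremalWeight_of_gt hgt] at hsum
    linarith
  · intro hle
    by_cases hmem : c * k ∈ Y
    · rw [← add_sum_erase _ _ hmem, extremalWeight_self,
        sum_congr rfl fun z hz => extremalWeight_of_lt ((hle z (mem_of_mem_erase hz)).lt_of_ne
          (ne_of_mem_erase hz))]
      have : 1 / (k : ℝ) ≤ 1 := div_le_one_of_le₀ (by exact_mod_cast hk) (by positivity)
      simp only [sum_const, card_erase_of_mem hmem, hY, add_tsub_cancel_right, nsmul_one]
      linarith
    · rw [sum_congr rfl fun z hz => extremalWeight_of_lt ((hle z hz).lt_of_ne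
          (ne_of_mem_of_not_mem hz hmem))]
      positivity

theorem exists_extremalWeight (hc : 0 < c) (hk : 0 < k) :
    ∃ f : Fin ((c + 1) * k) → ℝ, 0 ≤ ∑ x, f x ∧ #{x | 0 ≤ f x} = c * k ∧
      #{Y ∈ powersetCard (c + 1) univ | 0 ≤ ∑ y ∈ Y, f y} = (c * k + 1).choose (c + 1) := by
  have hck : c * k < (c + 1) * k := by rw [Nat.succ_mul]; omega
  refine ⟨fun x => extremalWeight c k x, ?_, ?_, ?_⟩
  · rw [Fin.sum_univ_eq_sum_range (extremalWeight c k), sum_range_extremalWeight hk]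
  · rw [show ({x | 0 ≤ extremalWeight c k x} : Finset (Fin ((c + 1) * k))) = Iio ⟨c * k, hck⟩ by
      ext x; simp [extremalWeight_nonneg_iff hc hk, Fin.lt_def], Fin.card_Iio]
  · rw [show ({Y ∈ powersetCard (c + 1) univ | 0 ≤ ∑ y ∈ Y, extremalWeight c k y} :
        Finset (Finset (Fin ((c + 1) * k)))) = powersetCard (c + 1) (Iic ⟨c * k, hck⟩) by
      ext Y
      simp only [mem_filter, mem_powersetCard, subset_univ, true_and, and_comm (a := Y ⊆ _)]
      refine and_congr_right fun hY => ?_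
      have := sum_extremalWeight_nonneg_iff hk (Y := Y.map Fin.valEmbedding)
        (by rw [card_map, hY])
      rw [sum_map, forall_mem_map] at this
      simpa [subset_iff, Fin.le_def] using this, card_powersetCard, Fin.card_Iic]

end extremalWeight

open Finset in
theorem stmt_16 (d n r : ℕ) (hd : 2 ≤ d) (hn : 0 < n) (hdvd : d ∣ n)
    (hr : r = (d - 1) * n / d) :
    IsLeast {m : ℕ | ∃ f : Fin n → ℝ, 0 ≤ ∑ x, f x ∧
        (univ.filter fun x => 0 ≤ f x).card = r ∧
        ((univ.powersetCard d).filter fun Y => 0 ≤ ∑ y ∈ Y, f y).card = m}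
      (r.choose d + r.choose (d - 1)) := by
  obtain ⟨c, rfl⟩ : ∃ c, d = c + 1 := ⟨d - 1, by omega⟩
  obtain ⟨k, rfl⟩ := hdvd
  have hc : 0 < c := by omega
  have hk : 0 < k := Nat.pos_of_mul_pos_left hn
  obtain rfl : r = c * k := by
    rw [hr, add_tsub_cancel_right, mul_left_comm, Nat.mul_div_cancel_left _ c.succ_pos]
  rw [add_tsub_cancel_right]
  refine ⟨?_, ?_⟩
  · obtain ⟨f, hf, hpos, hgood⟩ := exists_extremalWeight hc hk
    exact ⟨f, hf, hpos, by rw [hgood, Nat.choose_succ_succ', add_comm]⟩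
  · rintro m ⟨f, hf, hpos, rfl⟩
    have hneg : #{x | f x < 0} = k := by
      have := card_filter_add_card_filter_not (s := univ) (fun x => 0 ≤ f x)
      simp only [not_le, card_univ, Fintype.card_fin, hpos, Nat.succ_mul] at this
      omega
    obtain ⟨x, hx⟩ := card_pos.1 (hneg ▸ hk)
    simpa only [hpos] using choose_add_choose_le_card_filter_sum_nonneg f hf
      (by rw [hpos, hneg, mul_comm]) ⟨x, (mem_filter.1 hx).2⟩
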